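/- In the Gelfand triple setting with chain of spaces H_{k}, the following adjointness identity holds for every integer k: (A_{k+1}u, v)_{k-1} = (u, v)_k for all u ∈ H_{k+1} and v ∈ H_k. -/

import Mathlib

/-!
Call the identity at level `k` the statement that `A_{k+1}` is adjoint to the embedding
`H_k ⊆ H_{k-1}`. Both for going up and for going down one level, the point is that
`(A_{k+1} u, A_{k+2} w)_{k-1} = (u, w)_{k+1}`, because `A_{k+2}` restricts `A_{k+1}` and
`A_{k+1}` is an isometry. Going up, the identity at level `k` is applied to the vector
`A_{k+2} u ∈ H_k`; going down, `v ∈ H_k` is written as `A_{k+2} w` by surjectivity. The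
identity at level `1` is the defining property of the Gelfand triple, and induction on `ℤ`
in both directions from there gives every level.
-/

section GelfandChain

variable {E : Type*} [AddCommGroup E] [Module ℝ E]
  (H : ℤ → Submodule ℝ E) (ip : ℤ → E → E → ℝ) (A : ℤ → E →ₗ[ℝ] E)

def AdjointIdentityAt (k : ℤ) : Prop :=
  ∀ u ∈ H (k + 1), ∀ v ∈ H k, ip (k - 1) (A (k + 1) u) v = ip k u v

variable {H ip A}

theorem ip_sub_one_apply_apply (mono : ∀ k : ℤ, H (k + 1) ≤ H k)
    (restrict : ∀ k : ℤ, ∀ u ∈ H (k + 1), A (k + 1) u = A k u)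
    (ip_rec : ∀ k : ℤ, ∀ u ∈ H k, ∀ v ∈ H k, ip k u v = ip (k - 2) (A k u) (A k v))
    {k : ℤ} {u w : E} (hu : u ∈ H (k + 1)) (hw : w ∈ H (k + 2)) :
    ip (k - 1) (A (k + 1) u) (A (k + 2) w) = ip (k + 1) u w := by
  have hw' : w ∈ H (k + 1) := mono (k + 1) (by rwa [add_assoc, one_add_one_eq_two])
  have hAw : A (k + 2) w = A (k + 1) w := by
    rw [← restrict (k + 1) w (by rwa [add_assoc, one_add_one_eq_two]), add_assoc,
      one_add_one_eq_two]
  rw [hAw, ip_rec (k + 1) u hu w hw', show k + 1 - 2 = k - 1 by ring]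

namespace AdjointIdentityAt

theorem succ (mono : ∀ k : ℤ, H (k + 1) ≤ H k)
    (maps : ∀ k : ℤ, ∀ u ∈ H k, A k u ∈ H (k - 2))
    (restrict : ∀ k : ℤ, ∀ u ∈ H (k + 1), A (k + 1) u = A k u)
    (symm : ∀ k : ℤ, ∀ u ∈ H k, ∀ v ∈ H k, ip k u v = ip k v u)
    (ip_rec : ∀ k : ℤ, ∀ u ∈ H k, ∀ v ∈ H k, ip k u v = ip (k - 2) (A k u) (A k v))
    {k : ℤ} (h : AdjointIdentityAt H ip A k) : AdjointIdentityAt H ip A (k + 1) := by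
  intro u hu v hv
  rw [add_assoc, one_add_one_eq_two, add_sub_cancel_right] at *
  have hu' : u ∈ H (k + 1) := mono (k + 1) (by rwa [add_assoc, one_add_one_eq_two])
  have hAu : A (k + 2) u ∈ H k := by simpa using maps (k + 2) u hu
  calc ip k (A (k + 2) u) v
      = ip k v (A (k + 2) u) := symm k _ hAu v (mono k hv)
    _ = ip (k - 1) (A (k + 1) v) (A (k + 2) u) := (h v hv _ hAu).symm
    _ = ip (k + 1) v u := ip_sub_one_apply_apply mono restrict ip_rec hv hu
    _ = ip (k + 1) u v := symm (k + 1) v hv u hu'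

theorem of_succ (mono : ∀ k : ℤ, H (k + 1) ≤ H k)
    (restrict : ∀ k : ℤ, ∀ u ∈ H (k + 1), A (k + 1) u = A k u)
    (surj : ∀ k : ℤ, ∀ w ∈ H (k - 2), ∃ u ∈ H k, A k u = w)
    (symm : ∀ k : ℤ, ∀ u ∈ H k, ∀ v ∈ H k, ip k u v = ip k v u)
    (ip_rec : ∀ k : ℤ, ∀ u ∈ H k, ∀ v ∈ H k, ip k u v = ip (k - 2) (A k u) (A k v))
    {k : ℤ} (h : AdjointIdentityAt H ip A (k + 1)) : AdjointIdentityAt H ip A k := by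
  intro u hu v hv
  rw [AdjointIdentityAt, add_assoc, one_add_one_eq_two, add_sub_cancel_right] at h
  obtain ⟨w, hw, rfl⟩ := surj (k + 2) v (by simpa using hv)
  have hw' : w ∈ H (k + 1) := mono (k + 1) (by rwa [add_assoc, one_add_one_eq_two])
  calc ip (k - 1) (A (k + 1) u) (A (k + 2) w)
      = ip (k + 1) u w := ip_sub_one_apply_apply mono restrict ip_rec hu hw
    _ = ip (k + 1) w u := symm (k + 1) u hu w hw'
    _ = ip k (A (k + 2) w) u := (h w hw u hu).symm
    _ = ip k u (A (k + 2) w) := symm k _ hv u (mono k hu)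

end AdjointIdentityAt

end GelfandChain

/-- In the Gelfand triple setting with the chain of embedded Hilbert
spaces `H_k` (k ∈ ℤ), built from the pivot `H₀` with the operators
`A_k : H_k → H_{k-2}` (each `A_{k+2}` the restriction of `A_{k+1}`, with
`(u,v)_{k} = (A_k u, A_k v)_{k-2}` and the base defining property
`(A₂u, v)₀ = (u,v)₁`), the adjointness identity
`(A_{k+1}u, v)_{k-1} = (u, v)_k` holds for every integer `k`, all `u ∈ H_{k+1}` and
all `v ∈ H_k`.  The chain is modelled as an increasing family of submodules of an
ambient vector space `E` (the union of the chain), with inner products `ip k`. -/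
theorem statement_3
    {E : Type*} [AddCommGroup E] [Module ℝ E]
    (H : ℤ → Submodule ℝ E) (ip : ℤ → E → E → ℝ) (A : ℤ → E →ₗ[ℝ] E)
    (mono : ∀ k : ℤ, H (k + 1) ≤ H k)
    (maps : ∀ k : ℤ, ∀ u ∈ H k, A k u ∈ H (k - 2))
    (restrict : ∀ k : ℤ, ∀ u ∈ H (k + 1), A (k + 1) u = A k u)
    (surj : ∀ k : ℤ, ∀ w ∈ H (k - 2), ∃ u ∈ H k, A k u = w)
    (symm : ∀ k : ℤ, ∀ u ∈ H k, ∀ v ∈ H k, ip k u v = ip k v u)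
    (ip_rec : ∀ k : ℤ, ∀ u ∈ H k, ∀ v ∈ H k, ip k u v = ip (k - 2) (A k u) (A k v))
    (base : ∀ u ∈ H 2, ∀ v ∈ H 1, ip 0 (A 2 u) v = ip 1 u v) :
    ∀ k : ℤ, ∀ u ∈ H (k + 1), ∀ v ∈ H k, ip (k - 1) (A (k + 1) u) v = ip k u v := by
  intro k
  refine Int.inductionOn' k 1 base (fun n _ ih => ?_) (fun n _ ih => ?_)
  · exact AdjointIdentityAt.succ mono maps restrict symm ip_rec ih
  · exact AdjointIdentityAt.of_succ mono restrict surj symm ip_rec (by rwa [sub_add_cancel])
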